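/- Let 0 < θ ≤ 2, let a⁰ = {a_j⁰}_{j≥0} ∈ l², b⁰ = {b_j⁰}_{j≥0} ∈ l², and let the forcing f satisfy ∑_{j≥0} λ_j^{-2} ∫₀ᵀ f_j²(t) dt < ∞ (i.e. f ∈ L²(0,T; H^{-1})). Then the Leray-Hopf solution on [0,T] of the dyadic MHD model with forward energy cascade with initial data (a⁰, b⁰) is unique: any two Leray-Hopf solutions with this data and forcing coincide on [0,T]. -/

import Mathlib

open Real MeasureTheory Set
open scoped ENNReal NNReal

noncomputable section

/-- `lamPow l j s = λ_j^s` where `λ_j = l^j`. -/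
def lamPow (l : ℝ) (j : ℕ) (s : ℝ) : ℝ := (l ^ j : ℝ) ^ s

/-- Value of a shell-indexed quantity at the previous index,
with the convention that the `(-1)`-st entry vanishes. -/
def dprev (x : ℕ → ℝ → ℝ) : ℕ → ℝ → ℝ
  | 0 => fun _ => 0
  | j + 1 => x j

/-- `(a, b)` is a weak solution on `[0,T]` of the dyadic MHD model with forward
energy cascade (unit viscosity and resistivity), with forcing `f`:
`a_j' + λ_j² a_j + λ_j^θ a_j a_{j+1} − λ_{j-1}^θ a_{j-1}² + λ_j^θ b_j b_{j+1} − λ_{j-1}^θ b_{j-1}² = f_j`,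
`b_j' + λ_j² b_j − λ_j^θ a_j b_{j+1} + λ_j^θ b_j a_{j+1} = 0`,
with `a_j, b_j ∈ C¹([0,T])` and `a(t), b(t) ∈ l²` for each `t`. -/
def IsWeakSolutionFwd (l θ T : ℝ) (f a b : ℕ → ℝ → ℝ) : Prop :=
  (∀ j, ContDiffOn ℝ 1 (a j) (Icc 0 T)) ∧
  (∀ j, ContDiffOn ℝ 1 (b j) (Icc 0 T)) ∧
  (∀ t ∈ Icc 0 T, Summable fun j => (a j t) ^ 2) ∧
  (∀ t ∈ Icc 0 T, Summable fun j => (b j t) ^ 2) ∧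
  (∀ j, ∀ t ∈ Icc 0 T,
    derivWithin (a j) (Icc 0 T) t + lamPow l j 2 * a j t
      + lamPow l j θ * a j t * a (j + 1) t
      - dprev (fun i t => lamPow l i θ * (a i t) ^ 2) j t
      + lamPow l j θ * b j t * b (j + 1) t
      - dprev (fun i t => lamPow l i θ * (b i t) ^ 2) j t = f j t) ∧
  (∀ j, ∀ t ∈ Icc 0 T,
    derivWithin (b j) (Icc 0 T) t + lamPow l j 2 * b j t
      - lamPow l j θ * a j t * b (j + 1) t
      + lamPow l j θ * b j t * a (j + 1) t = 0)

/-- `(a, b)` is a Leray-Hopf solution on `[0,T]` of the dyadic MHD model with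
forward energy cascade: a weak solution belonging to
`L^∞(0,T; l²) ∩ L²(0,T; H¹)` and satisfying the energy inequality. -/
def IsLerayHopfFwd (l θ T : ℝ) (f a b : ℕ → ℝ → ℝ) : Prop :=
  IsWeakSolutionFwd l θ T f a b ∧
  (∃ M : ℝ, ∀ t ∈ Icc 0 T, (∑' j, (a j t) ^ 2) + (∑' j, (b j t) ^ 2) ≤ M) ∧
  Summable (fun j => ∫ t in (0:ℝ)..T, lamPow l j 2 * ((a j t) ^ 2 + (b j t) ^ 2)) ∧
  (∀ t ∈ Icc 0 T,
    (∑' j, ((a j t) ^ 2 + (b j t) ^ 2))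
      + 2 * ∑' j, ∫ τ in (0:ℝ)..t, lamPow l j 2 * ((a j τ) ^ 2 + (b j τ) ^ 2)
    ≤ (∑' j, ((a j 0) ^ 2 + (b j 0) ^ 2))
      + 2 * ∑' j, ∫ τ in (0:ℝ)..t, f j τ * a j τ)

private lemma lamPow_pos {l : ℝ} (hl : 0 < l) (j : ℕ) (s : ℝ) : 0 < lamPow l j s :=
  Real.rpow_pos_of_pos (pow_pos hl j) s

private lemma lamPow_inv_mul {l : ℝ} (hl : 0 < l) (j : ℕ) :
    lamPow l j (-2) * lamPow l j 2 = 1 := by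
  unfold lamPow
  rw [← Real.rpow_add (pow_pos hl j)]
  norm_num

private lemma lamPow_theta_le {l : ℝ} (hl : 1 ≤ l) (j : ℕ) {θ : ℝ} (hθ : θ ≤ 2) :
    lamPow l j θ ≤ lamPow l j 2 :=
  Real.rpow_le_rpow_of_exponent_le (one_le_pow₀ hl) hθ

private lemma lamPow_pow_eq {l : ℝ} (hl : 0 < l) (k : ℕ) :
    lamPow l k (-2) = ((l^k)^2)⁻¹ := by
  unfold lamPow
  rw [show ((-2:ℝ)) = -((2:ℕ):ℝ) by norm_num, Real.rpow_neg (pow_pos hl k).le,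
    Real.rpow_natCast]

private lemma lamPow_neg2_succ {l : ℝ} (hl : 0 < l) (j : ℕ) :
    lamPow l j (-2) = l^2 * lamPow l (j+1) (-2) := by
  have hne : (l:ℝ) ≠ 0 := ne_of_gt hl
  rw [lamPow_pow_eq hl j, lamPow_pow_eq hl (j+1), pow_succ]
  field_simp
  ring

private lemma lamPow_le_one {l : ℝ} (hl : 1 ≤ l) (j : ℕ) : lamPow l j (-2) ≤ 1 :=
  Real.rpow_le_one_of_one_le_of_nonpos (one_le_pow₀ hl) (by norm_num)

private lemma sq_le_imp (x y : ℝ) (hy : 0 ≤ y) (h : x^2 ≤ y^2) : x ≤ y := by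
  nlinarith [sq_nonneg (x - y), sq_nonneg (x + y)]

private lemma termD (l W W1 L2 L21 P c X h1 : ℝ) (hl : 1 ≤ l)
    (hW : 0 < W) (hW1 : 0 < W1) (hWL : W * L2 = 1) (hWL1 : W1 * L21 = 1)
    (hrel1 : W = l^2 * W1) (hP : 0 ≤ P) (hPle : P ≤ L2) (hc : c^2 * L21 ≤ h1) :
    2*W*P*c*X^2 ≤ X^2/16 + 16*h1*W*X^2 := by
  have hL21 : 0 < L21 := by nlinarith
  have hh1 : 0 ≤ h1 := le_trans (mul_nonneg (sq_nonneg c) hL21.le) hc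
  have hWP : 0 ≤ W*P := mul_nonneg hW.le hP
  have hWP1 : W*P ≤ 1 := by nlinarith [mul_le_mul_of_nonneg_left hPle hW.le]
  have hc2 : c^2 ≤ h1*W1 := by
    have e := mul_le_mul_of_nonneg_right hc hW1.le
    have e' : c^2*(W1*L21) = c^2 := by rw [hWL1]; ring
    nlinarith [e, e']
  have hc3 : c^2 ≤ h1*W := by
    nlinarith [mul_nonneg (mul_nonneg hh1 hW1.le) (show (0:ℝ) ≤ l^2 - 1 by nlinarith)]
  have hWP2 : (W*P)^2 ≤ 1 := by nlinarith
  have hx : (2*W*P*c)^2 ≤ 4*h1*W := by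
    nlinarith [mul_le_mul_of_nonneg_right hWP2 (sq_nonneg c), hc3]
  have hscal : 2*W*P*c ≤ 1/16 + 16*h1*W := by
    apply sq_le_imp _ _ (by positivity)
    nlinarith [sq_nonneg (1/16 - 16*h1*W)]
  nlinarith [mul_le_mul_of_nonneg_right hscal (sq_nonneg X)]

private lemma termF (l W W1 L2 P c X Y hm : ℝ) (hl : 1 ≤ l)
    (hW : 0 < W) (hW1 : 0 < W1) (hWL : W * L2 = 1)
    (hrel1 : W = l^2 * W1) (hP : 0 ≤ P) (hPle : P ≤ L2) (hc : c^2 * L2 ≤ hm) :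
    2*W*P*c*X*Y ≤ X^2/16 + 16*l^2*hm*W1*Y^2 := by
  have hL2 : 0 < L2 := by nlinarith
  have hhm : 0 ≤ hm := le_trans (mul_nonneg (sq_nonneg c) hL2.le) hc
  have hWP : 0 ≤ W*P := mul_nonneg hW.le hP
  have hWP1 : W*P ≤ 1 := by nlinarith [mul_le_mul_of_nonneg_left hPle hW.le]
  have hc2 : c^2 ≤ hm*W := by
    have e := mul_le_mul_of_nonneg_right hc hW.le
    have e' : c^2*(W*L2) = c^2 := by rw [hWL]; ring
    nlinarith [e, e']
  have key : (W*P*c*Y)^2 ≤ l^2*hm*W1*Y^2 := by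
    have e2 : (W*P)^2 ≤ 1 := by nlinarith
    have e3 : (W*P*c*Y)^2 ≤ (c*Y)^2 := by nlinarith [sq_nonneg (c*Y), mul_le_mul_of_nonneg_right e2 (sq_nonneg (c*Y))]
    have e4 : (c*Y)^2 ≤ hm*W*Y^2 := by nlinarith [mul_le_mul_of_nonneg_right hc2 (sq_nonneg Y)]
    have e5 : hm*W*Y^2 = l^2*hm*W1*Y^2 := by rw [hrel1]; ring
    linarith
  nlinarith [sq_nonneg (X/4 - 4*(W*P*c*Y)), key]

private lemma termB (l W W0 L20 Q c X Y h0 : ℝ) (hl : 1 ≤ l)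
    (hW : 0 < W) (hW0 : 0 < W0) (hWL0 : W0 * L20 = 1) (hrel0 : W0 = l^2 * W)
    (hQ : 0 ≤ Q) (hQle : Q ≤ L20) (hc : c^2 * L20 ≤ 4*h0) (hh0 : 0 ≤ h0) :
    2*W*Q*c*X*Y ≤ X^2/16 + 64*h0*W0*Y^2 := by
  have hL20 : 0 < L20 := by nlinarith
  have hWQ : 0 ≤ W*Q := mul_nonneg hW.le hQ
  have hWL20 : l^2*(W*L20) = 1 := by nlinarith
  have hWQ1 : W*Q ≤ 1 := by
    have h1 : W*Q ≤ W*L20 := mul_le_mul_of_nonneg_left hQle hW.le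
    nlinarith [mul_nonneg (show (0:ℝ) ≤ l^2 - 1 by nlinarith) (mul_pos hW hL20).le]
  have hc2 : c^2 ≤ 4*h0*W0 := by
    have e := mul_le_mul_of_nonneg_right hc hW0.le
    have e' : c^2*(W0*L20) = c^2 := by rw [hWL0]; ring
    nlinarith [e, e']
  have key : (W*Q*c*Y)^2 ≤ 4*h0*W0*Y^2 := by
    have e2 : (W*Q)^2 ≤ 1 := by nlinarith
    have e3 : (W*Q*c*Y)^2 ≤ (c*Y)^2 := by nlinarith [sq_nonneg (c*Y), mul_le_mul_of_nonneg_right e2 (sq_nonneg (c*Y))]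
    have e4 : (c*Y)^2 ≤ 4*h0*W0*Y^2 := by nlinarith [mul_le_mul_of_nonneg_right hc2 (sq_nonneg Y)]
    linarith
  nlinarith [sq_nonneg (X/4 - 4*(W*Q*c*Y)), key]

private lemma pos_of_mul_one (W L : ℝ) (hW : 0 < W) (h : W * L = 1) : 0 < L := by
  nlinarith

private lemma coef1 (l h0 hm h1 : ℝ) (hl2 : 1 ≤ l^2) (h0n : 0 ≤ h0) (hmn : 0 ≤ hm)
    (h1n : 0 ≤ h1) : 16*h1 ≤ 64*l^2*(h0+hm+h1) := by
  nlinarith [mul_le_mul_of_nonneg_right hl2 (by linarith : (0:ℝ) ≤ h0+hm+h1)]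

private lemma coef2 (l h0 hm h1 : ℝ) (hl2 : 1 ≤ l^2) (h0n : 0 ≤ h0) (hmn : 0 ≤ hm)
    (h1n : 0 ≤ h1) : 32*l^2*hm ≤ 64*l^2*(h0+hm+h1) := by
  nlinarith [mul_nonneg (by linarith : (0:ℝ) ≤ l^2) h0n,
    mul_nonneg (by linarith : (0:ℝ) ≤ l^2) hmn,
    mul_nonneg (by linarith : (0:ℝ) ≤ l^2) h1n]

private lemma coef3 (l h0 hm h1 : ℝ) (hl2 : 1 ≤ l^2) (h0n : 0 ≤ h0) (hmn : 0 ≤ hm)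
    (h1n : 0 ≤ h1) : 64*h0 ≤ 64*l^2*(h0+hm+h1) := by
  nlinarith [mul_le_mul_of_nonneg_right hl2 (by linarith : (0:ℝ) ≤ h0+hm+h1)]

private lemma core_bound (l W W0 W1 L2 L20 L21 P Q A B A0 B0 A1 B1 ap bp U V CA CB h0 hm h1 : ℝ)
    (hl : 1 ≤ l)
    (hW : 0 < W) (hW0 : 0 < W0) (hW1 : 0 < W1)
    (hWL : W * L2 = 1) (hWL0 : W0 * L20 = 1) (hWL1 : W1 * L21 = 1)
    (hrel0 : W0 = l^2 * W) (hrel1 : W = l^2 * W1)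
    (hP : 0 ≤ P) (hPle : P ≤ L2) (hQ : 0 ≤ Q) (hQle : Q ≤ L20)
    (hap : ap^2 * L21 ≤ h1) (hbp : bp^2 * L21 ≤ h1)
    (hU : U^2 * L2 ≤ hm) (hV : V^2 * L2 ≤ hm)
    (hCA : CA^2 * L20 ≤ 4*h0) (hCB : CB^2 * L20 ≤ 4*h0)
    (hh0 : 0 ≤ h0) :
    2*W*(A*(-L2*A - P*(A*ap + U*A1) + Q*(A0*CA + B0*CB) - P*(B*bp + V*B1))
       + B*(-L2*B + P*(A*bp + U*B1) - P*(B*ap + V*A1)))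
    ≤ 64*l^2*(h0+hm+h1) * (W0*(A0^2+B0^2) + W*(A^2+B^2) + W1*(A1^2+B1^2)) := by
  have hL2 : 0 < L2 := pos_of_mul_one W L2 hW hWL
  have hL20 : 0 < L20 := pos_of_mul_one W0 L20 hW0 hWL0
  have hL21 : 0 < L21 := pos_of_mul_one W1 L21 hW1 hWL1
  have hhm : 0 ≤ hm := le_trans (mul_nonneg (sq_nonneg U) hL2.le) hU
  have hh1 : 0 ≤ h1 := le_trans (mul_nonneg (sq_nonneg ap) hL21.le) hap
  have hap' : (-ap)^2 * L21 ≤ h1 := by rw [neg_sq]; exact hap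
  have hU' : (-U)^2 * L2 ≤ hm := by rw [neg_sq]; exact hU
  have hV' : (-V)^2 * L2 ≤ hm := by rw [neg_sq]; exact hV
  have hl2 : (1:ℝ) ≤ l^2 := by nlinarith
  have d1 := termD l W W1 L2 L21 P (-ap) A h1 hl hW hW1 hWL hWL1 hrel1 hP hPle hap'
  have d2 := termD l W W1 L2 L21 P (-ap) B h1 hl hW hW1 hWL hWL1 hrel1 hP hPle hap'
  have f1 := termF l W W1 L2 P (-U) A A1 hm hl hW hW1 hWL hrel1 hP hPle hU'
  have f2 := termF l W W1 L2 P (-V) A B1 hm hl hW hW1 hWL hrel1 hP hPle hV'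
  have f3 := termF l W W1 L2 P U B B1 hm hl hW hW1 hWL hrel1 hP hPle hU
  have f4 := termF l W W1 L2 P (-V) B A1 hm hl hW hW1 hWL hrel1 hP hPle hV'
  have b1 := termB l W W0 L20 Q CA A A0 h0 hl hW hW0 hWL0 hrel0 hQ hQle hCA hh0
  have b2 := termB l W W0 L20 Q CB A B0 h0 hl hW hW0 hWL0 hrel0 hQ hQle hCB hh0
  have expand : 2*W*(A*(-L2*A - P*(A*ap + U*A1) + Q*(A0*CA + B0*CB) - P*(B*bp + V*B1))
       + B*(-L2*B + P*(A*bp + U*B1) - P*(B*ap + V*A1)))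
      = -2*(W*L2)*(A^2+B^2) + 2*W*P*(-ap)*A^2 + 2*W*P*(-ap)*B^2 + 2*W*P*(-U)*A*A1
        + 2*W*P*(-V)*A*B1 + 2*W*P*U*B*B1 + 2*W*P*(-V)*B*A1
        + 2*W*Q*CA*A*A0 + 2*W*Q*CB*A*B0 := by ring
  rw [expand, hWL]
  have c1 : 16*h1*(W*(A^2+B^2)) ≤ 64*l^2*(h0+hm+h1)*(W*(A^2+B^2)) :=
    mul_le_mul_of_nonneg_right (coef1 l h0 hm h1 hl2 hh0 hhm hh1)
      (mul_nonneg hW.le (by positivity))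
  have c2 : 32*l^2*hm*(W1*(A1^2+B1^2)) ≤ 64*l^2*(h0+hm+h1)*(W1*(A1^2+B1^2)) :=
    mul_le_mul_of_nonneg_right (coef2 l h0 hm h1 hl2 hh0 hhm hh1)
      (mul_nonneg hW1.le (by positivity))
  have c3 : 64*h0*(W0*(A0^2+B0^2)) ≤ 64*l^2*(h0+hm+h1)*(W0*(A0^2+B0^2)) :=
    mul_le_mul_of_nonneg_right (coef3 l h0 hm h1 hl2 hh0 hhm hh1)
      (mul_nonneg hW0.le (by positivity))
  linarith [sq_nonneg A, sq_nonneg B, d1, d2, f1, f2, f3, f4, b1, b2, c1, c2, c3]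

private lemma slot_le (L s x : ℝ) (hL : 0 < L) (h : x^2 ≤ s) : x^2 * L ≤ L * s := by
  nlinarith

private lemma slotCA (L s x : ℝ) (hL : 0 < L) (h : x^2 ≤ 4*s) : x^2 * L ≤ 4*(L*s) := by
  nlinarith

private lemma shell_succ (l θ : ℝ) (hl0 : 0 < l) (hl1 : 1 ≤ l) (hθ2 : θ ≤ 2) (m : ℕ)
    (am bm um vm am1 bm1 um1 vm1 am2 bm2 um2 vm2 Da Du Db Dv fm : ℝ)
    (e1 : Da + lamPow l (m+1) 2 * am1 + lamPow l (m+1) θ * am1 * am2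
      - lamPow l m θ * am^2 + lamPow l (m+1) θ * bm1 * bm2 - lamPow l m θ * bm^2 = fm)
    (e2 : Du + lamPow l (m+1) 2 * um1 + lamPow l (m+1) θ * um1 * um2
      - lamPow l m θ * um^2 + lamPow l (m+1) θ * vm1 * vm2 - lamPow l m θ * vm^2 = fm)
    (e3 : Db + lamPow l (m+1) 2 * bm1 - lamPow l (m+1) θ * am1 * bm2
      + lamPow l (m+1) θ * bm1 * am2 = 0)
    (e4 : Dv + lamPow l (m+1) 2 * vm1 - lamPow l (m+1) θ * um1 * vm2
      + lamPow l (m+1) θ * vm1 * um2 = 0) :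
    lamPow l (m+1) (-2) * (2*(am1 - um1)*(Da - Du) + 2*(bm1 - vm1)*(Db - Dv))
    ≤ 64*l^2*(lamPow l m 2 * (am^2 + bm^2 + um^2 + vm^2)
        + lamPow l (m+1) 2 * (am1^2 + bm1^2 + um1^2 + vm1^2)
        + lamPow l (m+1+1) 2 * (am2^2 + bm2^2 + um2^2 + vm2^2))
      * (lamPow l m (-2) * ((am - um)^2 + (bm - vm)^2)
        + lamPow l (m+1) (-2) * ((am1 - um1)^2 + (bm1 - vm1)^2)
        + lamPow l (m+1+1) (-2) * ((am2 - um2)^2 + (bm2 - vm2)^2)) := by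
  have keyA : Da - Du
      = -(lamPow l (m+1) 2 * (am1 - um1))
        - lamPow l (m+1) θ * ((am1 - um1)*am2 + um1*(am2 - um2))
        + lamPow l m θ * ((am - um)*(am + um) + (bm - vm)*(bm + vm))
        - lamPow l (m+1) θ * ((bm1 - vm1)*bm2 + vm1*(bm2 - vm2)) := by
    linear_combination e1 - e2
  have keyB : Db - Dv
      = -(lamPow l (m+1) 2 * (bm1 - vm1))
        + lamPow l (m+1) θ * ((am1 - um1)*bm2 + um1*(bm2 - vm2))
        - lamPow l (m+1) θ * ((bm1 - vm1)*am2 + vm1*(am2 - um2)) := by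
    linear_combination e3 - e4
  have core := core_bound l (lamPow l (m+1) (-2)) (lamPow l m (-2)) (lamPow l (m+1+1) (-2))
    (lamPow l (m+1) 2) (lamPow l m 2) (lamPow l (m+1+1) 2)
    (lamPow l (m+1) θ) (lamPow l m θ)
    (am1 - um1) (bm1 - vm1) (am - um) (bm - vm) (am2 - um2) (bm2 - vm2)
    am2 bm2 um1 vm1 (am + um) (bm + vm)
    (lamPow l m 2 * (am^2 + bm^2 + um^2 + vm^2))
    (lamPow l (m+1) 2 * (am1^2 + bm1^2 + um1^2 + vm1^2))
    (lamPow l (m+1+1) 2 * (am2^2 + bm2^2 + um2^2 + vm2^2))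
    hl1 (lamPow_pos hl0 (m+1) (-2)) (lamPow_pos hl0 m (-2)) (lamPow_pos hl0 (m+1+1) (-2))
    (lamPow_inv_mul hl0 (m+1)) (lamPow_inv_mul hl0 m) (lamPow_inv_mul hl0 (m+1+1))
    (lamPow_neg2_succ hl0 m) (lamPow_neg2_succ hl0 (m+1))
    (lamPow_pos hl0 (m+1) θ).le (lamPow_theta_le hl1 (m+1) hθ2)
    (lamPow_pos hl0 m θ).le (lamPow_theta_le hl1 m hθ2)
    (slot_le _ _ _ (lamPow_pos hl0 (m+1+1) 2)
      (by linarith [sq_nonneg bm2, sq_nonneg um2, sq_nonneg vm2]))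
    (slot_le _ _ _ (lamPow_pos hl0 (m+1+1) 2)
      (by linarith [sq_nonneg am2, sq_nonneg um2, sq_nonneg vm2]))
    (slot_le _ _ _ (lamPow_pos hl0 (m+1) 2)
      (by linarith [sq_nonneg am1, sq_nonneg bm1, sq_nonneg vm1]))
    (slot_le _ _ _ (lamPow_pos hl0 (m+1) 2)
      (by linarith [sq_nonneg am1, sq_nonneg bm1, sq_nonneg um1]))
    (slotCA _ _ _ (lamPow_pos hl0 m 2)
      (by nlinarith [sq_nonneg (am - um), sq_nonneg am, sq_nonneg um, sq_nonneg bm, sq_nonneg vm]))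
    (slotCA _ _ _ (lamPow_pos hl0 m 2)
      (by nlinarith [sq_nonneg (bm - vm), sq_nonneg bm, sq_nonneg vm, sq_nonneg am, sq_nonneg um]))
    (mul_nonneg (lamPow_pos hl0 m 2).le (by positivity))
  refine le_trans (le_of_eq ?_) (le_trans core (le_of_eq ?_))
  · rw [keyA, keyB]; ring
  · ring

private lemma shell_zero (l θ : ℝ) (hl0 : 0 < l) (hl1 : 1 ≤ l) (hθ2 : θ ≤ 2)
    (am1 bm1 um1 vm1 am2 bm2 um2 vm2 Da Du Db Dv fm : ℝ)
    (e1 : Da + lamPow l 0 2 * am1 + lamPow l 0 θ * am1 * am2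
      - 0 + lamPow l 0 θ * bm1 * bm2 - 0 = fm)
    (e2 : Du + lamPow l 0 2 * um1 + lamPow l 0 θ * um1 * um2
      - 0 + lamPow l 0 θ * vm1 * vm2 - 0 = fm)
    (e3 : Db + lamPow l 0 2 * bm1 - lamPow l 0 θ * am1 * bm2
      + lamPow l 0 θ * bm1 * am2 = 0)
    (e4 : Dv + lamPow l 0 2 * vm1 - lamPow l 0 θ * um1 * vm2
      + lamPow l 0 θ * vm1 * um2 = 0) :
    lamPow l 0 (-2) * (2*(am1 - um1)*(Da - Du) + 2*(bm1 - vm1)*(Db - Dv))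
    ≤ 64*l^2*(0 + lamPow l 0 2 * (am1^2 + bm1^2 + um1^2 + vm1^2)
        + lamPow l (0+1) 2 * (am2^2 + bm2^2 + um2^2 + vm2^2))
      * (0 + lamPow l 0 (-2) * ((am1 - um1)^2 + (bm1 - vm1)^2)
        + lamPow l (0+1) (-2) * ((am2 - um2)^2 + (bm2 - vm2)^2)) := by
  have keyA : Da - Du
      = -(lamPow l 0 2 * (am1 - um1))
        - lamPow l 0 θ * ((am1 - um1)*am2 + um1*(am2 - um2))
        - lamPow l 0 θ * ((bm1 - vm1)*bm2 + vm1*(bm2 - vm2)) := by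
    linear_combination e1 - e2
  have keyB : Db - Dv
      = -(lamPow l 0 2 * (bm1 - vm1))
        + lamPow l 0 θ * ((am1 - um1)*bm2 + um1*(bm2 - vm2))
        - lamPow l 0 θ * ((bm1 - vm1)*am2 + vm1*(am2 - um2)) := by
    linear_combination e3 - e4
  have hWL0' : (l^2 * lamPow l 0 (-2)) * (lamPow l 0 2 / l^2) = 1 := by
    have h := lamPow_inv_mul hl0 0
    have hne : l ≠ 0 := ne_of_gt hl0
    field_simp
    linear_combination h
  have core := core_bound l (lamPow l 0 (-2)) (l^2 * lamPow l 0 (-2)) (lamPow l (0+1) (-2))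
    (lamPow l 0 2) (lamPow l 0 2 / l^2) (lamPow l (0+1) 2)
    (lamPow l 0 θ) (lamPow l 0 2 / l^2)
    (am1 - um1) (bm1 - vm1) 0 0 (am2 - um2) (bm2 - vm2)
    am2 bm2 um1 vm1 0 0
    0
    (lamPow l 0 2 * (am1^2 + bm1^2 + um1^2 + vm1^2))
    (lamPow l (0+1) 2 * (am2^2 + bm2^2 + um2^2 + vm2^2))
    hl1 (lamPow_pos hl0 0 (-2)) (mul_pos (pow_pos hl0 2) (lamPow_pos hl0 0 (-2)))
    (lamPow_pos hl0 (0+1) (-2))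
    (lamPow_inv_mul hl0 0) hWL0' (lamPow_inv_mul hl0 (0+1))
    rfl (lamPow_neg2_succ hl0 0)
    (lamPow_pos hl0 0 θ).le (lamPow_theta_le hl1 0 hθ2)
    (div_nonneg (lamPow_pos hl0 0 2).le (sq_nonneg l)) le_rfl
    (slot_le _ _ _ (lamPow_pos hl0 (0+1) 2)
      (by linarith [sq_nonneg bm2, sq_nonneg um2, sq_nonneg vm2]))
    (slot_le _ _ _ (lamPow_pos hl0 (0+1) 2)
      (by linarith [sq_nonneg am2, sq_nonneg um2, sq_nonneg vm2]))
    (slot_le _ _ _ (lamPow_pos hl0 0 2)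
      (by linarith [sq_nonneg am1, sq_nonneg bm1, sq_nonneg vm1]))
    (slot_le _ _ _ (lamPow_pos hl0 0 2)
      (by linarith [sq_nonneg am1, sq_nonneg bm1, sq_nonneg um1]))
    (by norm_num) (by norm_num) le_rfl
  refine le_trans (le_of_eq ?_) (le_trans core (le_of_eq ?_))
  · rw [keyA, keyB]; ring
  · ring

set_option maxHeartbeats 800000 in
private lemma tsum_bound (c : ℝ) (hc : 0 ≤ c) (x y xm ym : ℕ → ℝ)
    (hx : ∀ j, 0 ≤ x j) (hy : ∀ j, 0 ≤ y j)
    (hxm0 : xm 0 = 0) (hxms : ∀ j, xm (j+1) = x j)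
    (hym0 : ym 0 = 0) (hyms : ∀ j, ym (j+1) = y j) :
    (∑' j, ENNReal.ofReal (c*(xm j + x j + x (j+1)) * (ym j + y j + y (j+1))))
    ≤ (ENNReal.ofReal (9*c) * ∑' j, ENNReal.ofReal (x j)) * ∑' j, ENNReal.ofReal (y j) := by
  set X : ℝ≥0∞ := ∑' j, ENNReal.ofReal (x j) with hX
  set Y : ℝ≥0∞ := ∑' j, ENNReal.ofReal (y j) with hY
  have hxmnn : ∀ j, 0 ≤ xm j := by
    intro j
    cases j with
    | zero => rw [hxm0]
    | succ m => rw [hxms m]; exact hx m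
  have hxmle : ∀ j, ENNReal.ofReal (xm j) ≤ X := by
    intro j
    cases j with
    | zero => simp [hxm0]
    | succ m => rw [hxms m, hX]; exact ENNReal.le_tsum m
  have hxle : ∀ j, ENNReal.ofReal (x j) ≤ X := fun j => hX ▸ ENNReal.le_tsum j
  have hymle : ∀ j, ENNReal.ofReal (ym j) ≤ Y := by
    intro j
    cases j with
    | zero => simp [hym0]
    | succ m => rw [hyms m, hY]; exact ENNReal.le_tsum m
  have hbound : ∀ j, ENNReal.ofReal (c*(xm j + x j + x (j+1)) * (ym j + y j + y (j+1)))
      ≤ (ENNReal.ofReal c * (3 * X)) *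
        (ENNReal.ofReal (ym j) + ENNReal.ofReal (y j) + ENNReal.ofReal (y (j+1))) := by
    intro j
    rw [ENNReal.ofReal_mul (mul_nonneg hc (add_nonneg (add_nonneg (hxmnn j) (hx j)) (hx (j+1)))),
      ENNReal.ofReal_mul hc]
    refine mul_le_mul (mul_le_mul_right ?_ _) ?_ zero_le zero_le
    · calc ENNReal.ofReal (xm j + x j + x (j+1))
          ≤ ENNReal.ofReal (xm j) + ENNReal.ofReal (x j) + ENNReal.ofReal (x (j+1)) :=
            le_trans ENNReal.ofReal_add_le (add_le_add_left ENNReal.ofReal_add_le _)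
        _ ≤ X + X + X := add_le_add (add_le_add (hxmle j) (hxle j)) (hxle (j+1))
        _ = 3 * X := by ring
    · exact le_trans ENNReal.ofReal_add_le (add_le_add_left ENNReal.ofReal_add_le _)
  calc (∑' j, ENNReal.ofReal (c*(xm j + x j + x (j+1)) * (ym j + y j + y (j+1))))
      ≤ ∑' j, (ENNReal.ofReal c * (3 * X)) *
          (ENNReal.ofReal (ym j) + ENNReal.ofReal (y j) + ENNReal.ofReal (y (j+1))) :=
        ENNReal.tsum_le_tsum hbound
    _ = (ENNReal.ofReal c * (3 * X)) * ∑' j,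
          (ENNReal.ofReal (ym j) + ENNReal.ofReal (y j) + ENNReal.ofReal (y (j+1))) :=
        ENNReal.tsum_mul_left
    _ ≤ (ENNReal.ofReal c * (3 * X)) * (3 * Y) := by
        refine mul_le_mul_right ?_ _
        rw [ENNReal.tsum_add, ENNReal.tsum_add]
        have hA : (∑' j, ENNReal.ofReal (ym j)) ≤ Y := by
          rw [tsum_eq_zero_add' (f := fun j => ENNReal.ofReal (ym j)) ENNReal.summable, hym0]
          simp only [ENNReal.ofReal_zero, zero_add]
          exact le_of_eq ((tsum_congr fun j => by rw [hyms j]).trans hY.symm)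
        have hB : (∑' (j:ℕ), ENNReal.ofReal (y (j+1))) ≤ Y := by
          rw [hY, tsum_eq_zero_add' (f := fun j => ENNReal.ofReal (y j)) ENNReal.summable]
          exact le_add_self
        have hC : (∑' j, ENNReal.ofReal (y j)) ≤ Y := le_of_eq hY.symm
        calc (∑' j, ENNReal.ofReal (ym j)) + (∑' j, ENNReal.ofReal (y j))
              + (∑' (j:ℕ), ENNReal.ofReal (y (j+1)))
            ≤ Y + Y + Y := add_le_add (add_le_add hA hC) hB
          _ = 3 * Y := by ring
    _ = (ENNReal.ofReal (9*c) * X) * Y := by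
        rw [ENNReal.ofReal_mul (by norm_num : (0:ℝ) ≤ 9)]
        rw [show ENNReal.ofReal (9:ℝ) = (9:ℝ≥0∞) by
          rw [show (9:ℝ) = ((9:ℕ):ℝ) by norm_num, ENNReal.ofReal_natCast]; norm_num]
        ring

private lemma gronwall_zero (T : ℝ) (hT : 0 < T) (E Ψ : ℝ → ℝ≥0∞) (C : ℝ≥0∞)
    (hC : C ≠ ⊤) (hEbd : ∀ t ∈ Icc (0:ℝ) T, E t ≤ C)
    (hΨm : AEMeasurable Ψ (volume.restrict (Set.Ioc (0:ℝ) T)))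
    (hΨfin : ∫⁻ t in Set.Ioc (0:ℝ) T, Ψ t ≠ ⊤)
    (hkey : ∀ t ∈ Icc (0:ℝ) T, E t ≤ ∫⁻ τ in Set.Ioc (0:ℝ) t, Ψ τ * E τ) :
    ∀ t ∈ Icc (0:ℝ) T, E t = 0 := by
  have hE0 : E 0 = 0 := by
    have := hkey 0 ⟨le_refl 0, hT.le⟩
    simpa using this
  set A : Set ℝ := {s : ℝ | s ∈ Icc (0:ℝ) T ∧ ∀ τ ∈ Icc (0:ℝ) s, E τ = 0} with hA
  have hA0 : (0:ℝ) ∈ A := by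
    refine ⟨⟨le_rfl, hT.le⟩, fun τ hτ => ?_⟩
    have hτ0 : τ = 0 := le_antisymm hτ.2 hτ.1
    rw [hτ0]; exact hE0
  have hAne : A.Nonempty := ⟨0, hA0⟩
  have hbdd : BddAbove A := ⟨T, fun x hx => hx.1.2⟩
  set s₀ := sSup A with hs₀
  have hs₀0 : 0 ≤ s₀ := le_csSup hbdd hA0
  have hs₀T : s₀ ≤ T := csSup_le hAne (fun x hx => hx.1.2)
  have hlt : ∀ τ, 0 ≤ τ → τ < s₀ → E τ = 0 := by
    intro τ h0 hτ
    obtain ⟨s, hsA, hτs⟩ := exists_lt_of_lt_csSup hAne hτ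
    exact hsA.2 τ ⟨h0, hτs.le⟩
  have hzero : ∀ w, 0 ≤ w → w ≤ s₀ → ∫⁻ τ in Set.Ioc (0:ℝ) w, Ψ τ * E τ = 0 := by
    intro w h0 hw
    have hmeq : (fun τ => Ψ τ * E τ) =ᵐ[volume.restrict (Set.Ioc (0:ℝ) w)] (fun _ => 0) := by
      have h1 : ∀ᵐ τ ∂(volume.restrict (Set.Ioc (0:ℝ) w)), τ ∈ Set.Ioc (0:ℝ) w :=
        ae_restrict_mem measurableSet_Ioc
      have h2 : ∀ᵐ τ ∂(volume.restrict (Set.Ioc (0:ℝ) w)), τ ≠ s₀ := by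
        rw [Filter.eventually_iff, mem_ae_iff]
        have hs : {τ : ℝ | τ ≠ s₀}ᶜ = {s₀} := by ext x; simp
        rw [hs, Measure.restrict_apply (measurableSet_singleton _)]
        exact measure_mono_null Set.inter_subset_left (Real.volume_singleton)
      filter_upwards [h1, h2] with τ hτ hne
      have hτlt : τ < s₀ := lt_of_le_of_ne (hτ.2.trans hw) hne
      rw [hlt τ hτ.1.le hτlt, mul_zero]
    rw [lintegral_congr_ae hmeq, lintegral_zero]
  have hEs₀ : E s₀ = 0 := by
    have h := hkey s₀ ⟨hs₀0, hs₀T⟩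
    rw [hzero s₀ hs₀0 le_rfl] at h
    exact le_antisymm h zero_le
  have hs₀A : s₀ ∈ A := by
    refine ⟨⟨hs₀0, hs₀T⟩, fun τ hτ => ?_⟩
    rcases eq_or_lt_of_le hτ.2 with h | h
    · rw [h]; exact hEs₀
    · exact hlt τ hτ.1 h
  have hs₀eq : s₀ = T := by
    by_contra hne
    have hltT : s₀ < T := lt_of_le_of_ne hs₀T hne
    set Ψ' := hΨm.mk Ψ with hΨ'
    have hΨ'meas : Measurable Ψ' := hΨm.measurable_mk
    have hΨae : Ψ =ᵐ[volume.restrict (Set.Ioc (0:ℝ) T)] Ψ' := hΨm.ae_eq_mk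
    set ν : Measure ℝ := volume.withDensity Ψ' with hν
    have hint_eq : ∀ s : Set ℝ, MeasurableSet s → s ⊆ Set.Ioc (0:ℝ) T →
        ν s = ∫⁻ τ in s, Ψ τ := by
      intro s hs hsub
      rw [hν, withDensity_apply _ hs]
      exact (lintegral_congr_ae (ae_restrict_of_ae_restrict_of_subset hsub hΨae)).symm
    set g : ℕ → Set ℝ := fun n => Set.Ioc s₀ (s₀ + (T - s₀)/(n+1)) with hg
    have hgsub : ∀ n : ℕ, g n ⊆ Set.Ioc (0:ℝ) T := by
      intro n x hx
      have hd : (T - s₀)/((n:ℝ)+1) ≤ T - s₀ := by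
        apply div_le_self (by linarith)
        have : (0:ℝ) ≤ (n:ℝ) := Nat.cast_nonneg n
        linarith
      exact ⟨lt_of_le_of_lt hs₀0 hx.1, le_trans hx.2 (by linarith)⟩
    have hganti : Antitone g := by
      intro m n hmn
      apply Set.Ioc_subset_Ioc le_rfl
      have hc : ((m:ℝ)+1) ≤ ((n:ℝ)+1) := by
        have : (m:ℝ) ≤ (n:ℝ) := Nat.cast_le.mpr hmn
        linarith
      have := div_le_div_of_nonneg_left (by linarith : (0:ℝ) ≤ T - s₀)
        (by positivity : (0:ℝ) < (m:ℝ)+1) hc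
      linarith
    have hgempty : ⋂ n, g n = ∅ := by
      rw [Set.eq_empty_iff_forall_notMem]
      intro x hx
      have h0 := Set.mem_iInter.mp hx 0
      have hxs : 0 < x - s₀ := sub_pos.mpr h0.1
      obtain ⟨n, hn⟩ := exists_nat_gt ((T - s₀)/(x - s₀))
      have hn' := Set.mem_iInter.mp hx n
      have h1 : (T - s₀)/(x - s₀) < (n:ℝ)+1 := lt_trans hn (by linarith)
      have h2 : T - s₀ < ((n:ℝ)+1)*(x - s₀) := by rwa [div_lt_iff₀ hxs] at h1
      have h3 : (T - s₀)/((n:ℝ)+1) < x - s₀ := by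
        rw [div_lt_iff₀ (by positivity)]
        linarith
      have := hn'.2
      change x ≤ s₀ + (T - s₀)/((n:ℝ)+1) at this
      linarith
    have hfin0 : ν (g 0) ≠ ⊤ := by
      rw [hint_eq (g 0) measurableSet_Ioc (hgsub 0)]
      exact ne_top_of_le_ne_top hΨfin
        (lintegral_mono' (Measure.restrict_mono (hgsub 0) le_rfl) le_rfl)
    have htend := tendsto_measure_iInter_atTop (μ := ν)
      (fun n => measurableSet_Ioc.nullMeasurableSet) hganti ⟨0, hfin0⟩
    rw [hgempty, measure_empty] at htend
    have hev : ∀ᶠ n in Filter.atTop, ν (g n) < 2⁻¹ :=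
      htend.eventually_lt_const (by norm_num)
    obtain ⟨n₀, hn₀⟩ := hev.exists
    set δ := (T - s₀)/((n₀:ℝ)+1) with hδ
    have hδpos : 0 < δ := div_pos (by linarith) (by positivity)
    have hδle : s₀ + δ ≤ T := by
      have hd : (T - s₀)/((n₀:ℝ)+1) ≤ T - s₀ := by
        apply div_le_self (by linarith)
        have : (0:ℝ) ≤ (n₀:ℝ) := Nat.cast_nonneg n₀
        linarith
      simp only [hδ]; linarith
    set S := ⨆ τ ∈ Icc s₀ (s₀+δ), E τ with hS
    have hSle : S ≤ C := iSup₂_le fun τ hτ => hEbd τ ⟨le_trans hs₀0 hτ.1, le_trans hτ.2 hδle⟩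
    have hSne : S ≠ ⊤ := ne_top_of_le_ne_top hC hSle
    have hstep : ∀ t ∈ Icc s₀ (s₀+δ), E t ≤ 2⁻¹ * S := by
      intro t ht
      have htT : t ∈ Icc (0:ℝ) T := ⟨le_trans hs₀0 ht.1, le_trans ht.2 hδle⟩
      have hsplit : Set.Ioc (0:ℝ) t = Set.Ioc (0:ℝ) s₀ ∪ Set.Ioc s₀ t :=
        (Set.Ioc_union_Ioc_eq_Ioc hs₀0 ht.1).symm
      have hsubt : Set.Ioc s₀ t ⊆ Set.Ioc (0:ℝ) T :=
        fun x hx => ⟨lt_of_le_of_lt hs₀0 hx.1, le_trans hx.2 htT.2⟩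
      calc E t ≤ ∫⁻ τ in Set.Ioc (0:ℝ) t, Ψ τ * E τ := hkey t htT
        _ = (∫⁻ τ in Set.Ioc (0:ℝ) s₀, Ψ τ * E τ) + ∫⁻ τ in Set.Ioc s₀ t, Ψ τ * E τ := by
            rw [hsplit, lintegral_union measurableSet_Ioc (Set.Ioc_disjoint_Ioc_of_le le_rfl)]
        _ = ∫⁻ τ in Set.Ioc s₀ t, Ψ τ * E τ := by
            rw [hzero s₀ hs₀0 le_rfl, zero_add]
        _ ≤ ∫⁻ τ in Set.Ioc s₀ t, Ψ τ * S := by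
            refine setLIntegral_mono_ae
              ((hΨm.mono_measure (Measure.restrict_mono hsubt le_rfl)).mul_const S) ?_
            refine Filter.Eventually.of_forall (fun τ hτ => ?_)
            exact mul_le_mul_right (le_biSup (fun τ => E τ)
              (show τ ∈ Icc s₀ (s₀+δ) from ⟨hτ.1.le, hτ.2.trans ht.2⟩)) _
        _ = (∫⁻ τ in Set.Ioc s₀ t, Ψ τ) * S := lintegral_mul_const' S _ hSne
        _ ≤ 2⁻¹ * S := by
            refine mul_le_mul_left ?_ S
            have hsub2 : Set.Ioc s₀ t ⊆ g n₀ := Set.Ioc_subset_Ioc le_rfl ht.2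
            have h1 : ∫⁻ τ in Set.Ioc s₀ t, Ψ τ ≤ ν (g n₀) := by
              rw [hint_eq (g n₀) measurableSet_Ioc (hgsub n₀)]
              exact lintegral_mono' (Measure.restrict_mono hsub2 le_rfl) le_rfl
            exact le_trans h1 hn₀.le
    have hS2 : S ≤ 2⁻¹ * S := iSup₂_le hstep
    have hS0 : S = 0 := by
      by_contra hS0'
      have hlt2 : 2⁻¹ * S < 1 * S := by
        rw [mul_comm (2⁻¹ : ℝ≥0∞) S, mul_comm (1 : ℝ≥0∞) S]
        exact ENNReal.mul_lt_mul_right hS0' hSne (by norm_num)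
      rw [one_mul] at hlt2
      exact absurd hS2 (not_le.mpr hlt2)
    have hmem : s₀ + δ ∈ A := by
      refine ⟨⟨by linarith, hδle⟩, fun τ hτ => ?_⟩
      rcases le_or_gt τ s₀ with h | h
      · exact hs₀A.2 τ ⟨hτ.1, h⟩
      · have hle : E τ ≤ S := le_biSup (fun τ => E τ) (show τ ∈ Icc s₀ (s₀+δ) from ⟨h.le, hτ.2⟩)
        rw [hS0] at hle
        exact le_antisymm hle zero_le
    have hcon := le_csSup hbdd hmem
    rw [← hs₀] at hcon
    linarith
  intro t ht
  rcases eq_or_lt_of_le ht.2 with h | h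
  · rw [h, ← hs₀eq]; exact hEs₀
  · exact hlt t ht.1 (hs₀eq ▸ h)

set_option maxHeartbeats 1000000 in
/-- uniqueness of the Leray-Hopf solution to the dyadic MHD model
with forward energy cascade when `0 < θ ≤ 2`: any two Leray-Hopf solutions with
the same `l²` initial data and the same forcing `f ∈ L²(0,T; H^{-1})` coincide
on `[0,T]`. -/
theorem uniqueness_LerayHopf_dyadic_MHD_forward
    (l θ T : ℝ) (hl : 1 < l) (hθ1 : 0 < θ) (hθ2 : θ ≤ 2) (hT : 0 < T)
    (a0 b0 : ℕ → ℝ)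
    (ha0 : Summable fun j => (a0 j) ^ 2) (hb0 : Summable fun j => (b0 j) ^ 2)
    (f : ℕ → ℝ → ℝ)
    (hfi : ∀ j, IntervalIntegrable (fun t => (f j t) ^ 2) volume 0 T)
    (hf : Summable fun j => lamPow l j (-2) * ∫ t in (0:ℝ)..T, (f j t) ^ 2)
    (a b u v : ℕ → ℝ → ℝ)
    (hab : IsLerayHopfFwd l θ T f a b)
    (huv : IsLerayHopfFwd l θ T f u v)
    (hinita : ∀ j, a j 0 = a0 j) (hinitb : ∀ j, b j 0 = b0 j)
    (hinitu : ∀ j, u j 0 = a0 j) (hinitv : ∀ j, v j 0 = b0 j) :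
    ∀ j, ∀ t ∈ Icc 0 T, a j t = u j t ∧ b j t = v j t := by
  obtain ⟨⟨hca, hcb, hsa, hsb, hODEa, hODEb⟩, ⟨Ma, hMa⟩, hH1ab, -⟩ := hab
  obtain ⟨⟨hcu, hcv, hsu, hsv, hODEu, hODEv⟩, ⟨Mu, hMu⟩, hH1uv, -⟩ := huv
  have hl0 : (0:ℝ) < l := by linarith
  have hl1 : (1:ℝ) ≤ l := hl.le
  have hUD : UniqueDiffOn ℝ (Icc (0:ℝ) T) := uniqueDiffOn_Icc hT
  set Gf : ℕ → ℝ → ℝ := fun j t =>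
    lamPow l j (-2) * ((a j t - u j t)^2 + (b j t - v j t)^2) with hGf
  set hh : ℕ → ℝ → ℝ := fun j t =>
    lamPow l j 2 * ((a j t)^2 + (b j t)^2 + (u j t)^2 + (v j t)^2) with hhdef
  set Rf : ℕ → ℝ → ℝ := fun j t =>
    64*l^2*(dprev hh j t + hh j t + hh (j+1) t)
      * (dprev Gf j t + Gf j t + Gf (j+1) t) with hRf
  set Dq : ℕ → ℝ → ℝ := fun j t =>
    lamPow l j (-2) * (2*(a j t - u j t)
        * (derivWithin (a j) (Icc 0 T) t - derivWithin (u j) (Icc 0 T) t)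
      + 2*(b j t - v j t)
        * (derivWithin (b j) (Icc 0 T) t - derivWithin (v j) (Icc 0 T) t)) with hDq
  -- continuity
  have hcta : ∀ j, ContinuousOn (a j) (Icc (0:ℝ) T) := fun j => (hca j).continuousOn
  have hctb : ∀ j, ContinuousOn (b j) (Icc (0:ℝ) T) := fun j => (hcb j).continuousOn
  have hctu : ∀ j, ContinuousOn (u j) (Icc (0:ℝ) T) := fun j => (hcu j).continuousOn
  have hctv : ∀ j, ContinuousOn (v j) (Icc (0:ℝ) T) := fun j => (hcv j).continuousOn
  have hctG : ∀ j, ContinuousOn (fun t => Gf j t) (Icc (0:ℝ) T) := by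
    intro j
    simp only [hGf]
    exact continuousOn_const.mul ((((hcta j).sub (hctu j)).pow 2).add
      (((hctb j).sub (hctv j)).pow 2))
  have hcthh : ∀ j, ContinuousOn (fun t => hh j t) (Icc (0:ℝ) T) := by
    intro j
    simp only [hhdef]
    exact continuousOn_const.mul (((((hcta j).pow 2).add ((hctb j).pow 2)).add
      ((hctu j).pow 2)).add ((hctv j).pow 2))
  have hctdG : ∀ j, ContinuousOn (fun t => dprev Gf j t) (Icc (0:ℝ) T) := by
    intro j
    cases j with
    | zero => simpa [dprev] using (continuousOn_const (c := (0:ℝ)))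
    | succ m => simpa [dprev] using hctG m
  have hctdh : ∀ j, ContinuousOn (fun t => dprev hh j t) (Icc (0:ℝ) T) := by
    intro j
    cases j with
    | zero => simpa [dprev] using (continuousOn_const (c := (0:ℝ)))
    | succ m => simpa [dprev] using hcthh m
  have hctR : ∀ j, ContinuousOn (fun t => Rf j t) (Icc (0:ℝ) T) := by
    intro j
    simp only [hRf]
    exact (continuousOn_const.mul (((hctdh j).add (hcthh j)).add (hcthh (j+1)))).mul
      (((hctdG j).add (hctG j)).add (hctG (j+1)))
  -- nonnegativity
  have hGnn : ∀ j t, 0 ≤ Gf j t := by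
    intro j t
    simp only [hGf]
    exact mul_nonneg (lamPow_pos hl0 j (-2)).le (by positivity)
  have hhnn : ∀ j t, 0 ≤ hh j t := by
    intro j t
    simp only [hhdef]
    exact mul_nonneg (lamPow_pos hl0 j 2).le (by positivity)
  have hdGnn : ∀ j t, 0 ≤ dprev Gf j t := by
    intro j t
    cases j with
    | zero => simp [dprev]
    | succ m => simpa [dprev] using hGnn m t
  have hdhnn : ∀ j t, 0 ≤ dprev hh j t := by
    intro j t
    cases j with
    | zero => simp [dprev]
    | succ m => simpa [dprev] using hhnn m t
  have hRnn : ∀ j t, 0 ≤ Rf j t := by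
    intro j t
    simp only [hRf]
    refine mul_nonneg (mul_nonneg (by positivity) ?_) ?_
    · exact add_nonneg (add_nonneg (hdhnn j t) (hhnn j t)) (hhnn (j+1) t)
    · exact add_nonneg (add_nonneg (hdGnn j t) (hGnn j t)) (hGnn (j+1) t)
  -- derivative of Gf
  have hdG : ∀ j, ∀ t ∈ Icc (0:ℝ) T,
      HasDerivWithinAt (fun s => Gf j s) (Dq j t) (Icc (0:ℝ) T) t := by
    intro j t ht
    have h1 : HasDerivWithinAt (fun s => a j s - u j s)
        (derivWithin (a j) (Icc 0 T) t - derivWithin (u j) (Icc 0 T) t) (Icc (0:ℝ) T) t :=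
      ((((hca j).differentiableOn one_ne_zero) t ht).hasDerivWithinAt).sub
        ((((hcu j).differentiableOn one_ne_zero) t ht).hasDerivWithinAt)
    have h2 : HasDerivWithinAt (fun s => b j s - v j s)
        (derivWithin (b j) (Icc 0 T) t - derivWithin (v j) (Icc 0 T) t) (Icc (0:ℝ) T) t :=
      ((((hcb j).differentiableOn one_ne_zero) t ht).hasDerivWithinAt).sub
        ((((hcv j).differentiableOn one_ne_zero) t ht).hasDerivWithinAt)
    have h3 := ((h1.pow 2).add (h2.pow 2)).const_mul (lamPow l j (-2))
    simp only [hGf, hDq]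
    refine HasDerivWithinAt.congr_deriv h3 ?_
    push_cast
    ring
  -- continuity of Dq
  have hctDq : ∀ j, ContinuousOn (fun t => Dq j t) (Icc (0:ℝ) T) := by
    intro j
    have hcda := (hca j).continuousOn_derivWithin hUD le_rfl
    have hcdb := (hcb j).continuousOn_derivWithin hUD le_rfl
    have hcdu := (hcu j).continuousOn_derivWithin hUD le_rfl
    have hcdv := (hcv j).continuousOn_derivWithin hUD le_rfl
    simp only [hDq]
    exact continuousOn_const.mul
      (((continuousOn_const.mul ((hcta j).sub (hctu j))).mul (hcda.sub hcdu)).add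
        ((continuousOn_const.mul ((hctb j).sub (hctv j))).mul (hcdb.sub hcdv)))
  -- the shell-by-shell differential inequality
  have hDR : ∀ j, ∀ t ∈ Icc (0:ℝ) T, Dq j t ≤ Rf j t := by
    intro j t ht
    cases j with
    | zero =>
      have e1 := hODEa 0 t ht
      have e2 := hODEu 0 t ht
      have e3 := hODEb 0 t ht
      have e4 := hODEv 0 t ht
      simp only [dprev] at e1 e2 e3 e4
      have key := shell_zero l θ hl0 hl1 hθ2
        (a 0 t) (b 0 t) (u 0 t) (v 0 t)
        (a (0+1) t) (b (0+1) t) (u (0+1) t) (v (0+1) t)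
        (derivWithin (a 0) (Icc 0 T) t) (derivWithin (u 0) (Icc 0 T) t)
        (derivWithin (b 0) (Icc 0 T) t) (derivWithin (v 0) (Icc 0 T) t)
        (f 0 t) e1 e2 e3 e4
      simp only [hDq, hRf, hGf, hhdef, dprev]
      exact key
    | succ m =>
      have e1 := hODEa (m+1) t ht
      have e2 := hODEu (m+1) t ht
      have e3 := hODEb (m+1) t ht
      have e4 := hODEv (m+1) t ht
      simp only [dprev] at e1 e2 e3 e4
      have key := shell_succ l θ hl0 hl1 hθ2 m
        (a m t) (b m t) (u m t) (v m t)
        (a (m+1) t) (b (m+1) t) (u (m+1) t) (v (m+1) t)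
        (a (m+1+1) t) (b (m+1+1) t) (u (m+1+1) t) (v (m+1+1) t)
        (derivWithin (a (m+1)) (Icc 0 T) t) (derivWithin (u (m+1)) (Icc 0 T) t)
        (derivWithin (b (m+1)) (Icc 0 T) t) (derivWithin (v (m+1)) (Icc 0 T) t)
        (f (m+1) t) e1 e2 e3 e4
      simp only [hDq, hRf, hGf, hhdef, dprev]
      exact key
  -- integral inequality shell by shell
  have hGint : ∀ j, ∀ t ∈ Icc (0:ℝ) T, Gf j t ≤ ∫ τ in (0:ℝ)..t, Rf j τ := by
    intro j t ht
    have h0t : (0:ℝ) ≤ t := ht.1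
    have hsub : Icc (0:ℝ) t ⊆ Icc (0:ℝ) T := Icc_subset_Icc le_rfl ht.2
    have hsub' : ContinuousOn (fun τ => Dq j τ) (uIcc (0:ℝ) t) := by
      rw [uIcc_of_le h0t]; exact (hctDq j).mono hsub
    have hsub'' : ContinuousOn (fun τ => Rf j τ) (uIcc (0:ℝ) t) := by
      rw [uIcc_of_le h0t]; exact (hctR j).mono hsub
    have hder : ∀ x ∈ Ioo (0:ℝ) t, HasDerivWithinAt (fun s => Gf j s) (Dq j x) (Ioi x) x := by
      intro x hx
      have hxI : x ∈ Icc (0:ℝ) T := ⟨hx.1.le, (hx.2.trans_le ht.2).le⟩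
      exact ((hdG j x hxI).hasDerivAt (Icc_mem_nhds hx.1 (hx.2.trans_le ht.2))).hasDerivWithinAt
    have hint : IntervalIntegrable (fun τ => Dq j τ) volume 0 t := hsub'.intervalIntegrable
    have hFTC := intervalIntegral.integral_eq_sub_of_hasDeriv_right_of_le h0t
      ((hctG j).mono hsub) hder hint
    have hG00 : Gf j 0 = 0 := by
      simp only [hGf]
      rw [hinita j, hinitu j, hinitb j, hinitv j]
      ring
    have hmono : ∫ τ in (0:ℝ)..t, Dq j τ ≤ ∫ τ in (0:ℝ)..t, Rf j τ :=
      intervalIntegral.integral_mono_on h0t hint hsub''.intervalIntegrable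
        (fun x hx => hDR j x (hsub hx))
    calc Gf j t = ∫ τ in (0:ℝ)..t, Dq j τ := by rw [hFTC, hG00, sub_zero]
      _ ≤ ∫ τ in (0:ℝ)..t, Rf j τ := hmono
  -- pass to ℝ≥0∞
  set Ee : ℝ → ℝ≥0∞ := fun t => ∑' j, ENNReal.ofReal (Gf j t) with hEe
  set HHe : ℝ → ℝ≥0∞ := fun t => ∑' j, ENNReal.ofReal (hh j t) with hHHe
  set Psi : ℝ → ℝ≥0∞ := fun t => ENNReal.ofReal (9*(64*l^2)) * HHe t with hPsi
  have hpoint : ∀ τ, (∑' j, ENNReal.ofReal (Rf j τ)) ≤ Psi τ * Ee τ := by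
    intro τ
    have h := tsum_bound (64*l^2) (by positivity) (fun j => hh j τ) (fun j => Gf j τ)
      (fun j => dprev hh j τ) (fun j => dprev Gf j τ)
      (fun j => hhnn j τ) (fun j => hGnn j τ) rfl (fun j => rfl) rfl (fun j => rfl)
    simp only [hPsi, hHHe, hEe, hRf]
    exact h
  have hofR : ∀ j, ∀ t ∈ Icc (0:ℝ) T, ENNReal.ofReal (Gf j t)
      ≤ ∫⁻ τ in Set.Ioc (0:ℝ) t, ENNReal.ofReal (Rf j τ) := by
    intro j t ht
    have hInt : IntegrableOn (fun τ => Rf j τ) (Set.Ioc (0:ℝ) t) := by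
      have h1 : IntegrableOn (fun τ => Rf j τ) (Icc (0:ℝ) t) :=
        ((hctR j).mono (Icc_subset_Icc le_rfl ht.2)).integrableOn_compact isCompact_Icc
      exact h1.mono_set Set.Ioc_subset_Icc_self
    calc ENNReal.ofReal (Gf j t) ≤ ENNReal.ofReal (∫ τ in (0:ℝ)..t, Rf j τ) :=
          ENNReal.ofReal_le_ofReal (hGint j t ht)
      _ = ENNReal.ofReal (∫ τ in Set.Ioc (0:ℝ) t, Rf j τ) := by
          rw [intervalIntegral.integral_of_le ht.1]
      _ = ∫⁻ τ in Set.Ioc (0:ℝ) t, ENNReal.ofReal (Rf j τ) :=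
          ofReal_integral_eq_lintegral_ofReal hInt
            (Filter.Eventually.of_forall (fun τ => hRnn j τ))
  have hEkey : ∀ t ∈ Icc (0:ℝ) T, Ee t ≤ ∫⁻ τ in Set.Ioc (0:ℝ) t, Psi τ * Ee τ := by
    intro t ht
    have haerf : ∀ j : ℕ, AEMeasurable (fun τ => ENNReal.ofReal (Rf j τ))
        (volume.restrict (Set.Ioc (0:ℝ) t)) := by
      intro j
      have hsub : Set.Ioc (0:ℝ) t ⊆ Icc (0:ℝ) T := fun x hx => ⟨hx.1.le, hx.2.trans ht.2⟩
      exact ENNReal.measurable_ofReal.comp_aemeasurable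
        (((hctR j).mono hsub).aemeasurable measurableSet_Ioc)
    calc Ee t ≤ ∑' j, ∫⁻ τ in Set.Ioc (0:ℝ) t, ENNReal.ofReal (Rf j τ) :=
          ENNReal.tsum_le_tsum (fun j => hofR j t ht)
      _ = ∫⁻ τ in Set.Ioc (0:ℝ) t, ∑' j, ENNReal.ofReal (Rf j τ) := (lintegral_tsum haerf).symm
      _ ≤ ∫⁻ τ in Set.Ioc (0:ℝ) t, Psi τ * Ee τ := lintegral_mono (fun τ => hpoint τ)
  -- uniform bound on Ee
  have hEbd : ∀ t ∈ Icc (0:ℝ) T, Ee t ≤ ENNReal.ofReal (2*(Ma+Mu)) := by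
    intro t ht
    have hq : ∀ j, Gf j t ≤ 2*((a j t)^2 + (b j t)^2 + (u j t)^2 + (v j t)^2) := by
      intro j
      simp only [hGf]
      have h1 : lamPow l j (-2) ≤ 1 := lamPow_le_one hl1 j
      have h2 : (0:ℝ) ≤ (a j t - u j t)^2 + (b j t - v j t)^2 := by positivity
      nlinarith [sq_nonneg (a j t + u j t), sq_nonneg (b j t + v j t),
        mul_le_mul_of_nonneg_right h1 h2]
    have hsum4 : Summable (fun j => 2*((a j t)^2 + (b j t)^2 + (u j t)^2 + (v j t)^2)) := by
      apply Summable.mul_left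
      exact (((hsa t ht).add (hsb t ht)).add (hsu t ht)).add (hsv t ht)
    have h1 : Ee t ≤ ∑' j, ENNReal.ofReal (2*((a j t)^2 + (b j t)^2 + (u j t)^2 + (v j t)^2)) :=
      ENNReal.tsum_le_tsum (fun j => ENNReal.ofReal_le_ofReal (hq j))
    have h2 : (∑' j, ENNReal.ofReal (2*((a j t)^2 + (b j t)^2 + (u j t)^2 + (v j t)^2)))
        = ENNReal.ofReal (∑' j, 2*((a j t)^2 + (b j t)^2 + (u j t)^2 + (v j t)^2)) :=
      (ENNReal.ofReal_tsum_of_nonneg (fun j => by positivity) hsum4).symm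
    have h3 : (∑' j, 2*((a j t)^2 + (b j t)^2 + (u j t)^2 + (v j t)^2)) ≤ 2*(Ma+Mu) := by
      rw [tsum_mul_left]
      have e1 : (∑' j, ((a j t)^2 + (b j t)^2 + (u j t)^2 + (v j t)^2))
          = (∑' j, (a j t)^2) + (∑' j, (b j t)^2) + (∑' j, (u j t)^2) + (∑' j, (v j t)^2) := by
        rw [Summable.tsum_add (((hsa t ht).add (hsb t ht)).add (hsu t ht)) (hsv t ht),
          Summable.tsum_add ((hsa t ht).add (hsb t ht)) (hsu t ht),
          Summable.tsum_add (hsa t ht) (hsb t ht)]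
      rw [e1]
      have hma := hMa t ht
      have hmu := hMu t ht
      linarith
    calc Ee t ≤ _ := h1
      _ = _ := h2
      _ ≤ ENNReal.ofReal (2*(Ma+Mu)) := ENNReal.ofReal_le_ofReal h3
  -- measurability and finiteness of Psi
  have haeh : ∀ j : ℕ, AEMeasurable (fun τ => ENNReal.ofReal (hh j τ))
      (volume.restrict (Set.Ioc (0:ℝ) T)) := fun j =>
    ENNReal.measurable_ofReal.comp_aemeasurable
      (((hcthh j).mono Set.Ioc_subset_Icc_self).aemeasurable measurableSet_Ioc)
  have hHHm : AEMeasurable HHe (volume.restrict (Set.Ioc (0:ℝ) T)) := by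
    simp only [hHHe]
    exact AEMeasurable.ennreal_tsum haeh
  have hPsim : AEMeasurable Psi (volume.restrict (Set.Ioc (0:ℝ) T)) := by
    simp only [hPsi]
    exact hHHm.const_mul _
  have hHfin : ∫⁻ τ in Set.Ioc (0:ℝ) T, HHe τ ≠ ⊤ := by
    have h1 : ∫⁻ τ in Set.Ioc (0:ℝ) T, HHe τ
        = ∑' j, ∫⁻ τ in Set.Ioc (0:ℝ) T, ENNReal.ofReal (hh j τ) := by
      simp only [hHHe]
      exact lintegral_tsum haeh
    rw [h1]
    have hInt : ∀ j, IntegrableOn (fun τ => hh j τ) (Set.Ioc (0:ℝ) T) := fun j =>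
      ((hcthh j).integrableOn_compact isCompact_Icc).mono_set Set.Ioc_subset_Icc_self
    have h2 : ∀ j : ℕ, ∫⁻ τ in Set.Ioc (0:ℝ) T, ENNReal.ofReal (hh j τ)
        = ENNReal.ofReal (∫ τ in Set.Ioc (0:ℝ) T, hh j τ) := fun j =>
      (ofReal_integral_eq_lintegral_ofReal (hInt j)
        (Filter.Eventually.of_forall (fun τ => hhnn j τ))).symm
    rw [tsum_congr h2]
    have hab' : ∀ j, IntervalIntegrable (fun t => lamPow l j 2 * ((a j t)^2 + (b j t)^2))
        volume 0 T := by
      intro j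
      apply ContinuousOn.intervalIntegrable
      rw [uIcc_of_le hT.le]
      exact continuousOn_const.mul (((hcta j).pow 2).add ((hctb j).pow 2))
    have huv' : ∀ j, IntervalIntegrable (fun t => lamPow l j 2 * ((u j t)^2 + (v j t)^2))
        volume 0 T := by
      intro j
      apply ContinuousOn.intervalIntegrable
      rw [uIcc_of_le hT.le]
      exact continuousOn_const.mul (((hctu j).pow 2).add ((hctv j).pow 2))
    have heq : ∀ j : ℕ, ∫ τ in Set.Ioc (0:ℝ) T, hh j τ
        = (∫ t in (0:ℝ)..T, lamPow l j 2 * ((a j t)^2 + (b j t)^2))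
          + (∫ t in (0:ℝ)..T, lamPow l j 2 * ((u j t)^2 + (v j t)^2)) := by
      intro j
      rw [← intervalIntegral.integral_of_le hT.le, ← intervalIntegral.integral_add (hab' j) (huv' j)]
      apply intervalIntegral.integral_congr
      intro x hx
      simp only [hhdef]
      ring
    have hsumI : Summable (fun j => ∫ τ in Set.Ioc (0:ℝ) T, hh j τ) := by
      apply Summable.congr (f := fun j =>
        (∫ t in (0:ℝ)..T, lamPow l j 2 * ((a j t)^2 + (b j t)^2))
          + (∫ t in (0:ℝ)..T, lamPow l j 2 * ((u j t)^2 + (v j t)^2)))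
      · exact hH1ab.add hH1uv
      · exact fun j => (heq j).symm
    rw [← ENNReal.ofReal_tsum_of_nonneg
      (fun j => setIntegral_nonneg measurableSet_Ioc (fun τ _ => hhnn j τ)) hsumI]
    exact ENNReal.ofReal_ne_top
  have hPsifin : ∫⁻ τ in Set.Ioc (0:ℝ) T, Psi τ ≠ ⊤ := by
    simp only [hPsi]
    rw [lintegral_const_mul' _ _ ENNReal.ofReal_ne_top]
    exact ENNReal.mul_ne_top ENNReal.ofReal_ne_top hHfin
  -- Gronwall
  have hEzero := gronwall_zero T hT Ee Psi (ENNReal.ofReal (2*(Ma+Mu)))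
    ENNReal.ofReal_ne_top hEbd hPsim hPsifin hEkey
  -- conclusion
  intro j t ht
  have h1 : ENNReal.ofReal (Gf j t) = 0 := by
    have hle : ENNReal.ofReal (Gf j t) ≤ Ee t := by
      simp only [hEe]
      exact ENNReal.le_tsum j
    rw [hEzero t ht] at hle
    exact le_antisymm hle zero_le
  have h2 : Gf j t ≤ 0 := ENNReal.ofReal_eq_zero.mp h1
  have hWp := lamPow_pos hl0 j (-2)
  have h3 : (a j t - u j t)^2 + (b j t - v j t)^2 ≤ 0 := by
    by_contra hcon
    push_neg at hcon
    have hpos := mul_pos hWp hcon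
    simp only [hGf] at h2
    linarith
  constructor
  · have h4 : (a j t - u j t)^2 = 0 :=
      le_antisymm (by nlinarith [sq_nonneg (b j t - v j t)]) (sq_nonneg _)
    exact sub_eq_zero.mp (sq_eq_zero_iff.mp h4)
  · have h4 : (b j t - v j t)^2 = 0 :=
      le_antisymm (by nlinarith [sq_nonneg (a j t - u j t)]) (sq_nonneg _)
    exact sub_eq_zero.mp (sq_eq_zero_iff.mp h4)
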